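/- Let φ : ℂ → ℝ be of class C² and let g : ℂ → ℂ be smooth with compact support, and set h = e^{φ/2} g. Then ∫_ℂ ((−Δ_A + V) g)(z) · conj(g(z)) dλ(z) = 4 ∫_ℂ |(∂φ/∂z)·h − ∂h/∂z|² e^{−φ} dλ, where Δ_A g = (−∂/∂x − (i/2) ∂φ/∂y)² g + (−∂/∂y + (i/2) ∂φ/∂x)² g and V = ½Δφ. In particular ∫ ((−Δ_A + V) g) · conj(g) dλ is a nonnegative real number. -/

import Mathlib

open MeasureTheory

/-- Partial derivative `∂u/∂x` of `u : ℂ → ℂ` (identifying `ℂ ≅ ℝ²`, `z = x + iy`). -/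
noncomputable def pdx (u : ℂ → ℂ) (z : ℂ) : ℂ := fderiv ℝ u z 1

/-- Partial derivative `∂u/∂y` of `u : ℂ → ℂ`. -/
noncomputable def pdy (u : ℂ → ℂ) (z : ℂ) : ℂ := fderiv ℝ u z Complex.I

/-- Partial derivative `∂φ/∂x` of `φ : ℂ → ℝ`. -/
noncomputable def pdxR (φ : ℂ → ℝ) (z : ℂ) : ℝ := fderiv ℝ φ z 1

/-- Partial derivative `∂φ/∂y` of `φ : ℂ → ℝ`. -/
noncomputable def pdyR (φ : ℂ → ℝ) (z : ℂ) : ℝ := fderiv ℝ φ z Complex.I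

/-- The Laplacian `Δφ = ∂²φ/∂x² + ∂²φ/∂y²` of `φ : ℂ → ℝ`. -/
noncomputable def lap (φ : ℂ → ℝ) (z : ℂ) : ℝ :=
  pdxR (fun w => pdxR φ w) z + pdyR (fun w => pdyR φ w) z

/-- The operator `(-∂/∂x - (i/2) ∂φ/∂y)` appearing in the magnetic Laplacian. -/
noncomputable def opD1 (φ : ℂ → ℝ) (v : ℂ → ℂ) : ℂ → ℂ :=
  fun z => -(pdx v z) - (Complex.I / 2) * (pdyR φ z : ℂ) * v z

/-- The operator `(-∂/∂y + (i/2) ∂φ/∂x)` appearing in the magnetic Laplacian. -/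
noncomputable def opD2 (φ : ℂ → ℝ) (v : ℂ → ℂ) : ℂ → ℂ :=
  fun z => -(pdy v z) + (Complex.I / 2) * (pdxR φ z : ℂ) * v z

/-- The magnetic Laplacian `Δ_A = (-∂/∂x - (i/2)∂φ/∂y)² + (-∂/∂y + (i/2)∂φ/∂x)²`. -/
noncomputable def lapA (φ : ℂ → ℝ) (g : ℂ → ℂ) (z : ℂ) : ℂ :=
  opD1 φ (opD1 φ g) z + opD2 φ (opD2 φ g) z

/-- Wirtinger derivative `∂f/∂z = ½(∂f/∂x - i ∂f/∂y)` of `f : ℂ → ℂ`. -/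
noncomputable def wdz1 (f : ℂ → ℂ) (z : ℂ) : ℂ :=
  (1 / 2) * (pdx f z - Complex.I * pdy f z)

/-- Wirtinger derivative `∂φ/∂z = ½(∂φ/∂x - i ∂φ/∂y)` of a real-valued `φ : ℂ → ℝ`. -/
noncomputable def wdz1R (φ : ℂ → ℝ) (z : ℂ) : ℂ :=
  (1 / 2) * ((pdxR φ z : ℂ) - Complex.I * (pdyR φ z : ℂ))

/-! ### Auxiliary material -/

/-- The function `u = ∂g/∂z - ½ (∂φ/∂z) g` (the "twisted" derivative of `g`). -/
noncomputable def myU (φ : ℂ → ℝ) (g : ℂ → ℂ) : ℂ → ℂ :=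
  fun z => wdz1 g z - (1 / 2) * wdz1R φ z * g z

/-- The auxiliary function `F = u ⬝ conj g`. -/
noncomputable def myF (φ : ℂ → ℝ) (g : ℂ → ℂ) : ℂ → ℂ :=
  fun z => myU φ g z * (starRingEnd ℂ) (g z)

lemma integral_deriv_zero {f : ℝ → ℂ} (hf : ContDiff ℝ 1 f) (hsupp : HasCompactSupport f) :
    ∫ x, deriv f x = 0 := by
  have hcont : Continuous (deriv f) := hf.continuous_deriv le_rfl
  have hint : Integrable (deriv f) := hcont.integrable_of_hasCompactSupport hsupp.deriv
  have h1 := HasCompactSupport.integral_Ioi_deriv_eq hf hsupp 0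
  have h2 := HasCompactSupport.integral_Iic_deriv_eq hf hsupp 0
  have h3 := intervalIntegral.integral_Iic_add_Ioi (b := (0:ℝ)) (μ := volume)
    hint.integrableOn hint.integrableOn
  rw [h1, h2] at h3
  rw [← h3]; ring

lemma lineX_closedEmbedding (y : ℝ) :
    Topology.IsClosedEmbedding (fun t : ℝ => (↑t + ↑y * Complex.I : ℂ)) := by
  have hiso : Isometry (fun t : ℝ => (↑t + ↑y * Complex.I : ℂ)) :=
    Isometry.of_dist_eq (fun a b => by
      have e : (↑a + ↑y*Complex.I) - (↑b + ↑y*Complex.I) = ((a - b : ℝ) : ℂ) := by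
        push_cast; ring
      rw [Complex.dist_eq, Real.dist_eq, e, Complex.norm_real, Real.norm_eq_abs])
  exact hiso.isClosedEmbedding

lemma lineY_closedEmbedding (x : ℝ) :
    Topology.IsClosedEmbedding (fun t : ℝ => (↑x + ↑t * Complex.I : ℂ)) := by
  have hiso : Isometry (fun t : ℝ => (↑x + ↑t * Complex.I : ℂ)) :=
    Isometry.of_dist_eq (fun a b => by
      have e : (↑x + ↑a*Complex.I) - (↑x + ↑b*Complex.I) = ((a - b : ℝ) : ℂ) * Complex.I := by
        push_cast; ring
      rw [Complex.dist_eq, Real.dist_eq, e, norm_mul, Complex.norm_I, Complex.norm_real, Real.norm_eq_abs, mul_one])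
  exact hiso.isClosedEmbedding

lemma integral_pdx_eq_zero {F : ℂ → ℂ} (hF : ContDiff ℝ 1 F) (hFs : HasCompactSupport F) :
    ∫ z, pdx F z = 0 := by
  have hdF : Differentiable ℝ F := hF.differentiable (by norm_num)
  have hcont : Continuous (pdx F) :=
    (ContinuousLinearMap.apply ℝ ℂ 1).continuous.comp (hF.continuous_fderiv (by norm_num))
  have hsupp : HasCompactSupport (pdx F) := hFs.fderiv_apply ℝ 1
  have hint : Integrable (pdx F) := hcont.integrable_of_hasCompactSupport hsupp
  have hemb := Complex.measurableEquivRealProd.symm.measurableEmbedding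
  have hmp := Complex.volume_preserving_equiv_real_prod.symm Complex.measurableEquivRealProd
  rw [← hmp.integral_comp hemb (pdx F)]
  have hint2 : Integrable (fun p : ℝ × ℝ => pdx F (Complex.measurableEquivRealProd.symm p))
      (volume.prod volume) := by
    rw [← Measure.volume_eq_prod]
    exact (hmp.integrable_comp_emb hemb).mpr hint
  rw [show (volume : Measure (ℝ × ℝ)) = volume.prod volume from Measure.volume_eq_prod ℝ ℝ]
  rw [MeasureTheory.integral_prod _ hint2]
  rw [MeasureTheory.integral_integral_swap (by exact hint2)]
  have key : ∀ y : ℝ, (∫ x : ℝ, pdx F (Complex.measurableEquivRealProd.symm (x, y))) = 0 := by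
    intro y
    have hC : ContDiff ℝ 1 (fun t : ℝ => F (↑t + ↑y * Complex.I)) :=
      hF.comp ((Complex.ofRealCLM.contDiff).add contDiff_const)
    have hS : HasCompactSupport (fun t : ℝ => F (↑t + ↑y * Complex.I)) :=
      hFs.comp_isClosedEmbedding (lineX_closedEmbedding y)
    have hder : ∀ x : ℝ, deriv (fun t : ℝ => F (↑t + ↑y * Complex.I)) x
        = pdx F (↑x + ↑y * Complex.I) := by
      intro x
      have h1 : HasDerivAt (fun t : ℝ => (↑t + ↑y * Complex.I : ℂ)) 1 x := by
        simpa using (Complex.ofRealCLM.hasDerivAt (x := x)).add_const (↑y * Complex.I)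
      exact ((hdF _).hasFDerivAt.comp_hasDerivAt x h1).deriv
    calc (∫ x : ℝ, pdx F (Complex.measurableEquivRealProd.symm (x, y)))
        = ∫ x : ℝ, deriv (fun t : ℝ => F (↑t + ↑y * Complex.I)) x := by
          congr 1; funext x
          rw [hder x]
          simp [Function.comp, Complex.measurableEquivRealProd_symm_apply,
            Complex.mk_eq_add_mul_I]
      _ = 0 := integral_deriv_zero hC hS
  simp only [key, integral_zero]

lemma integral_pdy_eq_zero {F : ℂ → ℂ} (hF : ContDiff ℝ 1 F) (hFs : HasCompactSupport F) :
    ∫ z, pdy F z = 0 := by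
  have hdF : Differentiable ℝ F := hF.differentiable (by norm_num)
  have hcont : Continuous (pdy F) :=
    (ContinuousLinearMap.apply ℝ ℂ Complex.I).continuous.comp (hF.continuous_fderiv (by norm_num))
  have hsupp : HasCompactSupport (pdy F) := hFs.fderiv_apply ℝ Complex.I
  have hint : Integrable (pdy F) := hcont.integrable_of_hasCompactSupport hsupp
  have hemb := Complex.measurableEquivRealProd.symm.measurableEmbedding
  have hmp := Complex.volume_preserving_equiv_real_prod.symm Complex.measurableEquivRealProd
  rw [← hmp.integral_comp hemb (pdy F)]
  have hint2 : Integrable (fun p : ℝ × ℝ => pdy F (Complex.measurableEquivRealProd.symm p))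
      (volume.prod volume) := by
    rw [← Measure.volume_eq_prod]
    exact (hmp.integrable_comp_emb hemb).mpr hint
  rw [show (volume : Measure (ℝ × ℝ)) = volume.prod volume from Measure.volume_eq_prod ℝ ℝ]
  rw [MeasureTheory.integral_prod _ hint2]
  have key : ∀ x : ℝ, (∫ y : ℝ, pdy F (Complex.measurableEquivRealProd.symm (x, y))) = 0 := by
    intro x
    have hC : ContDiff ℝ 1 (fun t : ℝ => F (↑x + ↑t * Complex.I)) :=
      hF.comp (contDiff_const.add ((Complex.ofRealCLM.contDiff).mul contDiff_const))
    have hS : HasCompactSupport (fun t : ℝ => F (↑x + ↑t * Complex.I)) :=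
      hFs.comp_isClosedEmbedding (lineY_closedEmbedding x)
    have hder : ∀ y : ℝ, deriv (fun t : ℝ => F (↑x + ↑t * Complex.I)) y
        = pdy F (↑x + ↑y * Complex.I) := by
      intro y
      have h1 : HasDerivAt (fun t : ℝ => (↑x + ↑t * Complex.I : ℂ)) Complex.I y := by
        simpa using ((Complex.ofRealCLM.hasDerivAt (x := y)).mul_const Complex.I).const_add (↑x : ℂ)
      exact ((hdF _).hasFDerivAt.comp_hasDerivAt y h1).deriv
    calc (∫ y : ℝ, pdy F (Complex.measurableEquivRealProd.symm (x, y)))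
        = ∫ y : ℝ, deriv (fun t : ℝ => F (↑x + ↑t * Complex.I)) y := by
          congr 1; funext y
          rw [hder y]
          simp [Function.comp, Complex.measurableEquivRealProd_symm_apply,
            Complex.mk_eq_add_mul_I]
      _ = 0 := integral_deriv_zero hC hS
  simp only [key, integral_zero]

lemma pd_contDiff {E : Type*} [NormedAddCommGroup E] [NormedSpace ℝ E] {f : ℂ → E}
    {m n : WithTop ℕ∞} (hf : ContDiff ℝ n f) (hmn : m + 1 ≤ n) (v : ℂ) :
    ContDiff ℝ m (fun w => fderiv ℝ f w v) :=
  (ContinuousLinearMap.apply ℝ E v).contDiff.comp (hf.fderiv_right hmn)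

lemma fd_second {E : Type*} [NormedAddCommGroup E] [NormedSpace ℝ E] {f : ℂ → E} {z : ℂ}
    (hd : DifferentiableAt ℝ (fderiv ℝ f) z) (v₁ v₂ : ℂ) :
    fderiv ℝ (fun w => fderiv ℝ f w v₁) z v₂ = fderiv ℝ (fderiv ℝ f) z v₂ v₁ := by
  have h := hd.hasFDerivAt.clm_apply (hasFDerivAt_const v₁ z)
  rw [h.fderiv]
  simp

lemma pauliK1 (φ : ℂ → ℝ) (hφ : ContDiff ℝ 2 φ) (g : ℂ → ℂ) (hg : ContDiff ℝ 3 g) (z : ℂ) :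
    (-(lapA φ g z) + (((1 / 2) * lap φ z : ℝ) : ℂ) * g z) * (starRingEnd ℂ) (g z)
      = 4 * (myU φ g z * (starRingEnd ℂ) (myU φ g z))
        - 2 * (pdx (myF φ g) z + Complex.I * pdy (myF φ g) z) := by
  have hg' : Differentiable ℝ g := hg.differentiable (by norm_num)
  have hφ' : Differentiable ℝ φ := hφ.differentiable (by norm_num)
  have dgx : DifferentiableAt ℝ (fun w => fderiv ℝ g w 1) z :=
    ((pd_contDiff (m := 2) hg (by norm_num) 1).differentiable (by norm_num) (x := z) : _)
  have dgy : DifferentiableAt ℝ (fun w => fderiv ℝ g w Complex.I) z :=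
    ((pd_contDiff (m := 2) hg (by norm_num) Complex.I).differentiable (by norm_num) (x := z) : _)
  have dpx : DifferentiableAt ℝ (fun w => fderiv ℝ φ w 1) z :=
    ((pd_contDiff (m := 1) hφ (by norm_num) 1).differentiable (by norm_num) (x := z) : _)
  have dpy : DifferentiableAt ℝ (fun w => fderiv ℝ φ w Complex.I) z :=
    ((pd_contDiff (m := 1) hφ (by norm_num) Complex.I).differentiable (by norm_num) (x := z) : _)
  have hdg : DifferentiableAt ℝ (fderiv ℝ g) z :=
    ((hg.fderiv_right (m := 1) (by norm_num)).differentiable (by norm_num)) z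
  have hdφ : DifferentiableAt ℝ (fderiv ℝ φ) z :=
    ((hφ.fderiv_right (m := 1) (by norm_num)).differentiable (by norm_num)) z
  have Hg : HasFDerivAt g (fderiv ℝ g z) z := (hg' z).hasFDerivAt
  have Hgx := dgx.hasFDerivAt
  have Hgy := dgy.hasFDerivAt
  have Hpx : HasFDerivAt (fun w => ((fderiv ℝ φ w 1 : ℝ) : ℂ))
      (Complex.ofRealCLM.comp (fderiv ℝ (fun w => fderiv ℝ φ w 1) z)) z :=
    Complex.ofRealCLM.hasFDerivAt.comp z dpx.hasFDerivAt
  have Hpy : HasFDerivAt (fun w => ((fderiv ℝ φ w Complex.I : ℝ) : ℂ))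
      (Complex.ofRealCLM.comp (fderiv ℝ (fun w => fderiv ℝ φ w Complex.I) z)) z :=
    Complex.ofRealCLM.hasFDerivAt.comp z dpy.hasFDerivAt
  have C1 := Hgx.fun_neg.fun_sub ((Hpy.const_mul (Complex.I / 2)).fun_mul Hg)
  have C2 := Hgy.fun_neg.fun_add ((Hpx.const_mul (Complex.I / 2)).fun_mul Hg)
  have CU := ((Hgx.fun_sub (Hgy.const_mul Complex.I)).const_mul ((1:ℂ)/2)).fun_sub
    (((((Hpx.fun_sub (Hpy.const_mul Complex.I)).const_mul ((1:ℂ)/2)).const_mul ((1:ℂ)/2))).fun_mul Hg)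
  have HconjG : HasFDerivAt (fun w => (starRingEnd ℂ) (g w))
      (((starL' ℝ : ℂ ≃L[ℝ] ℂ) : ℂ →L[ℝ] ℂ) ∘L (fderiv ℝ g z)) z := (hg' z).hasFDerivAt.star
  have CF := CU.fun_mul HconjG
  have symmg : fderiv ℝ (fun w => fderiv ℝ g w Complex.I) z 1
      = fderiv ℝ (fun w => fderiv ℝ g w 1) z Complex.I := by
    rw [fd_second hdg Complex.I 1, fd_second hdg 1 Complex.I]
    exact (hg.contDiffAt.isSymmSndFDerivAt (by norm_num)).eq 1 Complex.I
  have symmp : fderiv ℝ (fun w => fderiv ℝ φ w Complex.I) z 1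
      = fderiv ℝ (fun w => fderiv ℝ φ w 1) z Complex.I := by
    rw [fd_second hdφ Complex.I 1, fd_second hdφ 1 Complex.I]
    exact (hφ.contDiffAt.isSymmSndFDerivAt (by norm_num)).eq 1 Complex.I
  simp only [lapA, opD1, opD2, lap, myF, myU, wdz1, wdz1R, pdx, pdy, pdxR, pdyR]
  rw [show opD1 φ g = (fun x => -(fderiv ℝ g x) 1
        - Complex.I / 2 * ↑((fderiv ℝ φ x) Complex.I) * g x) from rfl,
      show opD2 φ g = (fun x => -(fderiv ℝ g x) Complex.I
        + Complex.I / 2 * ↑((fderiv ℝ φ x) 1) * g x) from rfl,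
      show myF φ g = (fun y => (1 / 2 * ((fderiv ℝ g y) 1 - Complex.I * (fderiv ℝ g y) Complex.I)
        - 1 / 2 * (1 / 2 * (↑((fderiv ℝ φ y) 1) - Complex.I * ↑((fderiv ℝ φ y) Complex.I))) * g y)
        * (starRingEnd ℂ) (g y)) from rfl]
  rw [C1.fderiv, C2.fderiv, CF.fderiv]
  simp only [ContinuousLinearMap.add_apply, ContinuousLinearMap.sub_apply,
    ContinuousLinearMap.neg_apply, ContinuousLinearMap.smul_apply,
    ContinuousLinearMap.coe_comp', Function.comp_apply, Complex.ofRealCLM_apply,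
    smul_eq_mul, ContinuousLinearEquiv.coe_coe, starL'_apply, RCLike.star_def]
  simp only [map_sub, map_mul, map_add, map_div₀, map_one, map_ofNat,
    Complex.conj_I, Complex.conj_ofReal]
  rw [symmg, symmp]
  push_cast
  linear_combination (-(fderiv ℝ (fun w => (fderiv ℝ g w) Complex.I) z Complex.I)
    + (1/2 : ℂ) * g z * ((fderiv ℝ (fun w => (fderiv ℝ φ w) Complex.I) z Complex.I : ℝ) : ℂ)
    - (1/4 : ℂ) * g z * (((fderiv ℝ φ z 1 : ℝ) : ℂ))^2) * (starRingEnd ℂ) (g z) * Complex.I_sq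

lemma pauliK2 (φ : ℂ → ℝ) (hφ : ContDiff ℝ 2 φ) (g : ℂ → ℂ) (hg : ContDiff ℝ 3 g) (z : ℂ) :
    ‖wdz1R φ z * (Complex.exp ((φ z : ℂ) / 2) * g z)
        - wdz1 (fun w => Complex.exp ((φ w : ℂ) / 2) * g w) z‖ ^ 2 * Real.exp (-(φ z))
      = ‖myU φ g z‖ ^ 2 := by
  have hg' : Differentiable ℝ g := hg.differentiable (by norm_num)
  have hφ' : Differentiable ℝ φ := hφ.differentiable (by norm_num)
  have hinner : HasFDerivAt (fun w => ((φ w : ℂ)) / 2)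
      ((2:ℂ)⁻¹ • (Complex.ofRealCLM.comp (fderiv ℝ φ z))) z := by
    simpa [div_eq_inv_mul] using
      (Complex.ofRealCLM.hasFDerivAt.comp z (hφ' z).hasFDerivAt).const_mul ((2:ℂ)⁻¹)
  have He := hinner.cexp
  have CH := He.fun_mul (hg' z).hasFDerivAt
  have key : wdz1R φ z * (Complex.exp ((φ z : ℂ) / 2) * g z)
      - wdz1 (fun w => Complex.exp ((φ w : ℂ) / 2) * g w) z
      = -(Complex.exp ((φ z : ℂ) / 2)) * myU φ g z := by
    simp only [wdz1, wdz1R, myU, pdx, pdy, pdxR, pdyR]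
    rw [CH.fderiv]
    simp only [ContinuousLinearMap.add_apply, ContinuousLinearMap.sub_apply,
      ContinuousLinearMap.neg_apply, ContinuousLinearMap.smul_apply,
      ContinuousLinearMap.coe_comp', Function.comp_apply, Complex.ofRealCLM_apply,
      smul_eq_mul]
    ring
  rw [key]
  have habs : ‖-(Complex.exp ((φ z : ℂ) / 2)) * myU φ g z‖
      = Real.exp (φ z / 2) * ‖myU φ g z‖ := by
    rw [norm_mul, norm_neg,
      show ((φ z : ℂ) / 2) = ((φ z / 2 : ℝ) : ℂ) by push_cast; ring, Complex.norm_exp,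
      Complex.ofReal_re]
  rw [habs]
  have h1 : Real.exp (φ z / 2) ^ 2 * Real.exp (-(φ z)) = 1 := by
    rw [sq, ← Real.exp_add, ← Real.exp_add]; norm_num
  calc (Real.exp (φ z / 2) * ‖myU φ g z‖) ^ 2 * Real.exp (-(φ z))
      = ‖myU φ g z‖ ^ 2 * (Real.exp (φ z / 2) ^ 2 * Real.exp (-(φ z))) := by ring
    _ = ‖myU φ g z‖ ^ 2 := by rw [h1, mul_one]

lemma fderiv_zero_of_nmem {E : Type*} [NormedAddCommGroup E] [NormedSpace ℝ E]
    {f : ℂ → E} {x : ℂ} (hx : x ∉ tsupport f) : fderiv ℝ f x = 0 := by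
  have h : x ∉ Function.support (fderiv ℝ f) := fun h => hx (support_fderiv_subset ℝ h)
  simpa [Function.mem_support, not_not] using h

lemma myU_contDiff (φ : ℂ → ℝ) (hφ : ContDiff ℝ 2 φ) (g : ℂ → ℂ) (hg : ContDiff ℝ 3 g) :
    ContDiff ℝ 1 (myU φ g) := by
  show ContDiff ℝ 1 (fun z => 1 / 2 * (fderiv ℝ g z 1 - Complex.I * fderiv ℝ g z Complex.I)
    - 1 / 2 * (1 / 2 * ((fderiv ℝ φ z 1 : ℂ) - Complex.I * (fderiv ℝ φ z Complex.I : ℂ))) * g z)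
  have h1 : ContDiff ℝ 1 (fun w => fderiv ℝ g w 1) :=
    (pd_contDiff (m := 2) hg (by norm_num) 1).of_le one_le_two
  have h2 : ContDiff ℝ 1 (fun w => fderiv ℝ g w Complex.I) :=
    (pd_contDiff (m := 2) hg (by norm_num) Complex.I).of_le one_le_two
  have h3 : ContDiff ℝ 1 (fun w => ((fderiv ℝ φ w 1 : ℝ) : ℂ)) :=
    Complex.ofRealCLM.contDiff.comp (pd_contDiff (m := 1) hφ (by norm_num) 1)
  have h4 : ContDiff ℝ 1 (fun w => ((fderiv ℝ φ w Complex.I : ℝ) : ℂ)) :=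
    Complex.ofRealCLM.contDiff.comp (pd_contDiff (m := 1) hφ (by norm_num) Complex.I)
  exact (contDiff_const.mul (h1.sub (contDiff_const.mul h2))).sub
    ((contDiff_const.mul (contDiff_const.mul (h3.sub (contDiff_const.mul h4)))).mul
      (hg.of_le (by norm_num)))

lemma myF_contDiff (φ : ℂ → ℝ) (hφ : ContDiff ℝ 2 φ) (g : ℂ → ℂ) (hg : ContDiff ℝ 3 g) :
    ContDiff ℝ 1 (myF φ g) := by
  show ContDiff ℝ 1 (fun z => myU φ g z * star (g z))
  exact (myU_contDiff φ hφ g hg).mul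
    (((starL' ℝ : ℂ ≃L[ℝ] ℂ).toContinuousLinearMap.contDiff).comp
      (hg.of_le (by norm_num : (1:WithTop ℕ∞) ≤ 3)))

lemma myU_supp (φ : ℂ → ℝ) (g : ℂ → ℂ) (hgs : HasCompactSupport g) :
    HasCompactSupport (myU φ g) := by
  apply HasCompactSupport.intro hgs
  intro x hx
  have h0 : g x = 0 := image_eq_zero_of_notMem_tsupport hx
  have h1 : fderiv ℝ g x = 0 := fderiv_zero_of_nmem hx
  simp [myU, wdz1, wdz1R, pdx, pdy, h0, h1]

lemma myF_supp (φ : ℂ → ℝ) (g : ℂ → ℂ) (hgs : HasCompactSupport g) :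
    HasCompactSupport (myF φ g) := by
  apply HasCompactSupport.intro hgs
  intro x hx
  have h0 : g x = 0 := image_eq_zero_of_notMem_tsupport hx
  simp [myF, h0]

/-- Let `φ : ℂ → ℝ` be of class `C²`, let `g : ℂ → ℂ` be smooth with
compact support, and set `h = e^{φ/2}g`. Then
`∫ ((-Δ_A + V)g)·conj(g) dλ = 4 ∫ |(∂φ/∂z)·h - ∂h/∂z|² e^{-φ} dλ` (`V = ½Δφ`);
in particular the left-hand side is a nonnegative real number. -/
theorem pauli_plus_quadratic_form
    (φ : ℂ → ℝ) (hφ : ContDiff ℝ 2 φ)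
    (g : ℂ → ℂ) (hg : ContDiff ℝ (⊤ : ℕ∞) g) (hgs : HasCompactSupport g)
    (h : ℂ → ℂ) (hh : h = fun z => Complex.exp ((φ z : ℂ) / 2) * g z) :
    ∫ z, (-(lapA φ g z) + (((1 / 2) * lap φ z : ℝ) : ℂ) * g z) * (starRingEnd ℂ) (g z)
      = ((4 * ∫ z, ‖wdz1R φ z * h z - wdz1 h z‖ ^ 2 * Real.exp (-(φ z)) : ℝ) : ℂ) ∧
    0 ≤ (4 * ∫ z, ‖wdz1R φ z * h z - wdz1 h z‖ ^ 2 * Real.exp (-(φ z)) : ℝ) := by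
  subst hh
  have hg3 : ContDiff ℝ 3 g := hg.of_le (by exact WithTop.coe_le_coe.mpr (le_top : (3:ℕ∞) ≤ ⊤))
  have hU1 := myU_contDiff φ hφ g hg3
  have hUs := myU_supp φ g hgs
  have hF1 := myF_contDiff φ hφ g hg3
  have hFs := myF_supp φ g hgs
  have hrhs : (∫ z, ‖wdz1R φ z * ((fun z => Complex.exp ((φ z : ℂ) / 2) * g z) z)
        - wdz1 (fun z => Complex.exp ((φ z : ℂ) / 2) * g z) z‖ ^ 2 * Real.exp (-(φ z)))
      = ∫ z, ‖myU φ g z‖ ^ 2 := by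
    congr 1; funext z
    exact pauliK2 φ hφ g hg3 z
  constructor
  · -- the identity
    have hint_pdxF : Integrable (pdx (myF φ g)) :=
      (((ContinuousLinearMap.apply ℝ ℂ 1).continuous.comp
        (hF1.continuous_fderiv (by norm_num))).integrable_of_hasCompactSupport
          (hFs.fderiv_apply ℝ 1))
    have hint_pdyF : Integrable (pdy (myF φ g)) :=
      (((ContinuousLinearMap.apply ℝ ℂ Complex.I).continuous.comp
        (hF1.continuous_fderiv (by norm_num))).integrable_of_hasCompactSupport
          (hFs.fderiv_apply ℝ Complex.I))
    have hintA : Integrable (fun z => 4 * (myU φ g z * (starRingEnd ℂ) (myU φ g z))) := by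
      apply Continuous.integrable_of_hasCompactSupport
      · exact continuous_const.mul (hU1.continuous.mul (continuous_star.comp hU1.continuous))
      · apply HasCompactSupport.intro hUs
        intro x hx
        have h0 : myU φ g x = 0 := image_eq_zero_of_notMem_tsupport hx
        simp [h0]
    have hintB : Integrable (fun z => 2 * (pdx (myF φ g) z + Complex.I * pdy (myF φ g) z)) :=
      ((hint_pdxF.add (hint_pdyF.const_mul Complex.I)).const_mul 2)
    rw [show (fun z => (-(lapA φ g z) + (((1 / 2) * lap φ z : ℝ) : ℂ) * g z)
          * (starRingEnd ℂ) (g z))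
        = (fun z => (4 : ℂ) * (myU φ g z * (starRingEnd ℂ) (myU φ g z))
          - 2 * (pdx (myF φ g) z + Complex.I * pdy (myF φ g) z))
      from funext (fun z => pauliK1 φ hφ g hg3 z)]
    have hA : ∀ z : ℂ, (myU φ g z * (starRingEnd ℂ) (myU φ g z))
        = ((‖myU φ g z‖ ^ 2 : ℝ) : ℂ) := by
      intro z
      rw [Complex.mul_conj, ← Complex.sq_norm]
    have hintAbs : Integrable (fun z => ‖myU φ g z‖ ^ 2) := by
      apply Continuous.integrable_of_hasCompactSupport
      · exact (continuous_norm.comp hU1.continuous).pow 2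
      · apply HasCompactSupport.intro hUs
        intro x hx
        have h0 : myU φ g x = 0 := image_eq_zero_of_notMem_tsupport hx
        simp [h0]
    have hB0 : (∫ a : ℂ, 2 * (pdx (myF φ g) a + Complex.I * pdy (myF φ g) a)) = 0 := by
      rw [MeasureTheory.integral_const_mul,
        integral_add hint_pdxF (hint_pdyF.const_mul Complex.I), MeasureTheory.integral_const_mul,
        integral_pdx_eq_zero hF1 hFs, integral_pdy_eq_zero hF1 hFs]
      simp
    have hA0 : (∫ a : ℂ, 4 * (myU φ g a * (starRingEnd ℂ) (myU φ g a)))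
        = ((4 * ∫ z, ‖myU φ g z‖ ^ 2 : ℝ) : ℂ) := by
      simp only [hA]
      rw [MeasureTheory.integral_const_mul]
      rw [show (∫ z, ((‖myU φ g z‖ ^ 2 : ℝ) : ℂ))
          = (((∫ z, ‖myU φ g z‖ ^ 2 : ℝ)) : ℂ)
        from Complex.ofRealCLM.integral_comp_comm hintAbs]
      push_cast
      ring
    rw [integral_sub hintA hintB, hA0, hB0, hrhs, sub_zero]
  · -- nonnegativity
    have h0 : 0 ≤ ∫ z, ‖wdz1R φ z * ((fun z => Complex.exp ((φ z : ℂ) / 2) * g z) z)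
        - wdz1 (fun z => Complex.exp ((φ z : ℂ) / 2) * g z) z‖ ^ 2 * Real.exp (-(φ z)) := by
      apply integral_nonneg
      intro z
      positivity
    exact mul_nonneg (by norm_num) h0
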